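/- arXiv:2211.13349 — 8 statements merged into one kernel-verified Lean document; each statement's English description precedes it below -/
import Mathlib

section
/- If a conditional distribution p_B(a,b,c|x,z) on finite sets, with setting sets X = Z = B, is bilocal-classical, then the distribution p_E(a,b,c) := p_B(a,b,c | x=b, z=b) (which is a normalized distribution on A × B × C) is Evans-classical. -/
open Finset

/-- `p : A → B → C → ℝ` is Evans-classical: it factorizes according to the
Evans causal structure with finite classical latent variables `Λ = Fin nΛ`, `M = Fin nM`. -/
def IsEvansClassical {A B C : Type*} [Fintype A] [Fintype B] [Fintype C]
    (p : A → B → C → ℝ) : Prop :=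
  ∃ (nΛ nM : ℕ) (qΛ : Fin nΛ → ℝ) (qM : Fin nM → ℝ)
    (kA : B → Fin nΛ → A → ℝ) (kB : Fin nΛ → Fin nM → B → ℝ)
    (kC : B → Fin nM → C → ℝ),
    (∀ l, 0 ≤ qΛ l) ∧ (∑ l, qΛ l = 1) ∧
    (∀ m, 0 ≤ qM m) ∧ (∑ m, qM m = 1) ∧
    (∀ b l a, 0 ≤ kA b l a) ∧ (∀ b l, ∑ a, kA b l a = 1) ∧
    (∀ l m b, 0 ≤ kB l m b) ∧ (∀ l m, ∑ b, kB l m b = 1) ∧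
    (∀ b m c, 0 ≤ kC b m c) ∧ (∀ b m, ∑ c, kC b m c = 1) ∧
    (∀ a b c, p a b c = ∑ l, ∑ m, qΛ l * qM m * kA b l a * kB l m b * kC b m c)

/-- `p : A → B → C → X → Z → ℝ` (with settings `X = Z = B`) is bilocal-classical. -/
def IsBilocalClassical {A B C : Type*} [Fintype A] [Fintype B] [Fintype C]
    (p : A → B → C → B → B → ℝ) : Prop :=
  ∃ (nΛ nM : ℕ) (qΛ : Fin nΛ → ℝ) (qM : Fin nM → ℝ)
    (kA : B → Fin nΛ → A → ℝ) (kB : Fin nΛ → Fin nM → B → ℝ)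
    (kC : B → Fin nM → C → ℝ),
    (∀ l, 0 ≤ qΛ l) ∧ (∑ l, qΛ l = 1) ∧
    (∀ m, 0 ≤ qM m) ∧ (∑ m, qM m = 1) ∧
    (∀ x l a, 0 ≤ kA x l a) ∧ (∀ x l, ∑ a, kA x l a = 1) ∧
    (∀ l m b, 0 ≤ kB l m b) ∧ (∀ l m, ∑ b, kB l m b = 1) ∧
    (∀ z m c, 0 ≤ kC z m c) ∧ (∀ z m, ∑ c, kC z m c = 1) ∧
    (∀ a b c x z, p a b c x z = ∑ l, ∑ m, qΛ l * qM m * kA x l a * kB l m b * kC z m c)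

/-- If a conditional distribution `p(a,b,c|x,z)` with setting sets
`X = Z = B` is bilocal-classical, then the projected distribution
`p_E(a,b,c) := p(a,b,c | x = b, z = b)` is Evans-classical. -/
theorem bilocal_projection_is_evansClassical
    {A B C : Type*} [Fintype A] [Fintype B] [Fintype C]
    [Nonempty A] [Nonempty B] [Nonempty C]
    (p : A → B → C → B → B → ℝ)
    (hp0 : ∀ a b c x z, 0 ≤ p a b c x z)
    (hp1 : ∀ x z, ∑ a, ∑ b, ∑ c, p a b c x z = 1)
    (hbl : IsBilocalClassical p) :
    IsEvansClassical (fun a b c => p a b c b b) := by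
  obtain ⟨nΛ, nM, qΛ, qM, kA, kB, kC, h1, h2, h3, h4, h5, h6, h7, h8, h9, h10, h11⟩ := hbl
  exact ⟨nΛ, nM, qΛ, qM, kA, kB, kC, h1, h2, h3, h4, h5, h6, h7, h8, h9, h10,
    fun a b c => h11 a b c b b⟩
end

section
/- If a distribution p_E(a,b,c) on A × B × C is Evans-classical, then there exists a bilocal-classical conditional distribution p_B(a,b,c|x,z) with setting sets X = Z = B such that p_B(a,b,c | x=b, z=b) = p_E(a,b,c) for all a, b, c. -/
open Finset

theorem sum_swap5 {A B C L M : Type*} [Fintype A] [Fintype B] [Fintype C] [Fintype L] [Fintype M]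
    (F : A → B → C → L → M → ℝ) :
    ∑ a, ∑ b, ∑ c, ∑ l, ∑ m, F a b c l m = ∑ l, ∑ m, ∑ a, ∑ b, ∑ c, F a b c l m :=
  calc ∑ a, ∑ b, ∑ c, ∑ l, ∑ m, F a b c l m
      = ∑ a, ∑ b, ∑ l, ∑ c, ∑ m, F a b c l m :=
        Finset.sum_congr rfl fun _ _ => Finset.sum_congr rfl fun _ _ => Finset.sum_comm
    _ = ∑ a, ∑ l, ∑ b, ∑ c, ∑ m, F a b c l m :=
        Finset.sum_congr rfl fun _ _ => Finset.sum_comm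
    _ = ∑ l, ∑ a, ∑ b, ∑ c, ∑ m, F a b c l m := Finset.sum_comm
    _ = ∑ l, ∑ a, ∑ b, ∑ m, ∑ c, F a b c l m :=
        Finset.sum_congr rfl fun _ _ => Finset.sum_congr rfl fun _ _ =>
          Finset.sum_congr rfl fun _ _ => Finset.sum_comm
    _ = ∑ l, ∑ a, ∑ m, ∑ b, ∑ c, F a b c l m :=
        Finset.sum_congr rfl fun _ _ => Finset.sum_congr rfl fun _ _ => Finset.sum_comm
    _ = ∑ l, ∑ m, ∑ a, ∑ b, ∑ c, F a b c l m :=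
        Finset.sum_congr rfl fun _ _ => Finset.sum_comm

/-- If `p_E` is Evans-classical then there exists a bilocal-classical
conditional distribution `p_B(a,b,c|x,z)` with settings `X = Z = B` whose projection
`p_B(a,b,c|x=b,z=b)` equals `p_E`. -/
theorem evansClassical_extends_to_bilocal
    {A B C : Type*} [Fintype A] [Fintype B] [Fintype C]
    [Nonempty A] [Nonempty B] [Nonempty C]
    (pE : A → B → C → ℝ)
    (hp0 : ∀ a b c, 0 ≤ pE a b c)
    (hp1 : ∑ a, ∑ b, ∑ c, pE a b c = 1)
    (hE : IsEvansClassical pE) :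
    ∃ pB : A → B → C → B → B → ℝ,
      (∀ a b c x z, 0 ≤ pB a b c x z) ∧
      (∀ x z, ∑ a, ∑ b, ∑ c, pB a b c x z = 1) ∧
      IsBilocalClassical pB ∧
      (∀ a b c, pB a b c b b = pE a b c) := by
  obtain ⟨nΛ, nM, qΛ, qM, kA, kB, kC, hqΛ0, hqΛ1, hqM0, hqM1,
    hkA0, hkA1, hkB0, hkB1, hkC0, hkC1, hfac⟩ := hE
  refine ⟨fun a b c x z => ∑ l, ∑ m, qΛ l * qM m * kA x l a * kB l m b * kC z m c,
    ?_, ?_, ⟨nΛ, nM, qΛ, qM, kA, kB, kC, hqΛ0, hqΛ1, hqM0, hqM1,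
      hkA0, hkA1, hkB0, hkB1, hkC0, hkC1, fun a b c x z => rfl⟩,
    fun a b c => (hfac a b c).symm⟩
  · intro a b c x z
    exact Finset.sum_nonneg fun l _ => Finset.sum_nonneg fun m _ =>
      mul_nonneg (mul_nonneg (mul_nonneg (mul_nonneg (hqΛ0 l) (hqM0 m))
        (hkA0 x l a)) (hkB0 l m b)) (hkC0 z m c)
  · intro x z
    rw [sum_swap5 (fun a b c l m => qΛ l * qM m * kA x l a * kB l m b * kC z m c)]
    simp only [← Finset.mul_sum, hkA1, hkB1, hkC1, mul_one]
    simp [← Finset.mul_sum, hqM1, hqΛ1]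
end

section
/- The set of Evans-classical distributions on A × B × C, viewed as a subset of the real vector space of functions A × B × C → ℝ, is path-connected (every Evans-classical distribution is connected to the uniform distribution by the straight-line path, which stays inside the set). -/
open Finset

lemma evans_sum_one {A B C : Type*} [Fintype A] [Fintype B] [Fintype C]
    {nΛ nM : ℕ} (qΛ : Fin nΛ → ℝ) (qM : Fin nM → ℝ)
    (kA : B → Fin nΛ → A → ℝ) (kB : Fin nΛ → Fin nM → B → ℝ)
    (kC : B → Fin nM → C → ℝ)
    (hqΛ : ∑ l, qΛ l = 1) (hqM : ∑ m, qM m = 1)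
    (hkA : ∀ b l, ∑ a, kA b l a = 1) (hkB : ∀ l m, ∑ b, kB l m b = 1)
    (hkC : ∀ b m, ∑ c, kC b m c = 1) :
    ∑ x : A × B × C, (∑ l, ∑ m,
      qΛ l * qM m * kA x.2.1 l x.1 * kB l m x.2.1 * kC x.2.1 m x.2.2) = 1 := by
  have key : ∀ (l : Fin nΛ) (m : Fin nM),
      ∑ x : A × B × C, qΛ l * qM m * kA x.2.1 l x.1 * kB l m x.2.1 * kC x.2.1 m x.2.2
      = qΛ l * qM m := by
    intro l m
    simp only [Fintype.sum_prod_type]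
    rw [Finset.sum_comm]
    have h1 : ∀ b a, ∑ c, qΛ l * qM m * kA b l a * kB l m b * kC b m c
        = qΛ l * qM m * kA b l a * kB l m b := by
      intro b a
      rw [← Finset.mul_sum, hkC, mul_one]
    have h2 : ∀ b, ∑ a, qΛ l * qM m * kA b l a * kB l m b
        = qΛ l * qM m * kB l m b := by
      intro b
      have : ∀ a, qΛ l * qM m * kA b l a * kB l m b
          = qΛ l * qM m * kB l m b * kA b l a := fun a => by ring
      simp_rw [this]
      rw [← Finset.mul_sum, hkA, mul_one]
    simp_rw [h1, h2]
    rw [← Finset.mul_sum, hkB, mul_one]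
  rw [Finset.sum_comm]
  calc ∑ l, ∑ x : A × B × C, ∑ m,
        qΛ l * qM m * kA x.2.1 l x.1 * kB l m x.2.1 * kC x.2.1 m x.2.2
      = ∑ l, ∑ m, ∑ x : A × B × C,
        qΛ l * qM m * kA x.2.1 l x.1 * kB l m x.2.1 * kC x.2.1 m x.2.2 := by
        exact Finset.sum_congr rfl (fun l _ => Finset.sum_comm)
    _ = ∑ l, ∑ m, qΛ l * qM m := by simp_rw [key]
    _ = 1 := by simp_rw [← Finset.mul_sum, hqM, mul_one, hqΛ]

lemma evans_mem {A B C : Type*} [Fintype A] [Fintype B] [Fintype C]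
    {nΛ nM : ℕ} (qΛ : Fin nΛ → ℝ) (qM : Fin nM → ℝ)
    (kA : B → Fin nΛ → A → ℝ) (kB : Fin nΛ → Fin nM → B → ℝ)
    (kC : B → Fin nM → C → ℝ)
    (hqΛ0 : ∀ l, 0 ≤ qΛ l) (hqΛ : ∑ l, qΛ l = 1)
    (hqM0 : ∀ m, 0 ≤ qM m) (hqM : ∑ m, qM m = 1)
    (hkA0 : ∀ b l a, 0 ≤ kA b l a) (hkA : ∀ b l, ∑ a, kA b l a = 1)
    (hkB0 : ∀ l m b, 0 ≤ kB l m b) (hkB : ∀ l m, ∑ b, kB l m b = 1)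
    (hkC0 : ∀ b m c, 0 ≤ kC b m c) (hkC : ∀ b m, ∑ c, kC b m c = 1) :
    (fun x : A × B × C => ∑ l, ∑ m,
      qΛ l * qM m * kA x.2.1 l x.1 * kB l m x.2.1 * kC x.2.1 m x.2.2) ∈
    {p : A × B × C → ℝ |
      (∀ x, 0 ≤ p x) ∧ (∑ x, p x = 1) ∧
      IsEvansClassical (fun a b c => p (a, b, c))} := by
  refine ⟨?_, ?_, nΛ, nM, qΛ, qM, kA, kB, kC, hqΛ0, hqΛ, hqM0, hqM, hkA0, hkA,
    hkB0, hkB, hkC0, hkC, fun a b c => rfl⟩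
  · intro x
    refine Finset.sum_nonneg fun l _ => Finset.sum_nonneg fun m _ => ?_
    exact mul_nonneg (mul_nonneg (mul_nonneg (mul_nonneg (hqΛ0 l) (hqM0 m))
      (hkA0 _ _ _)) (hkB0 _ _ _)) (hkC0 _ _ _)
  · exact evans_sum_one qΛ qM kA kB kC hqΛ hqM hkA hkB hkC

/-- The set of Evans-classical distributions on `A × B × C`, viewed as a
subset of the real vector space `(A × B × C) → ℝ` with its standard topology, is
path-connected. -/
theorem evansClassical_isPathConnected
    {A B C : Type*} [Fintype A] [Fintype B] [Fintype C]
    [Nonempty A] [Nonempty B] [Nonempty C] :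
    IsPathConnected {p : A × B × C → ℝ |
      (∀ x, 0 ≤ p x) ∧ (∑ x, p x = 1) ∧
      IsEvansClassical (fun a b c => p (a, b, c))} := by
  set F := {p : A × B × C → ℝ |
      (∀ x, 0 ≤ p x) ∧ (∑ x, p x = 1) ∧
      IsEvansClassical (fun a b c => p (a, b, c))} with hF
  -- the uniform kernels
  set uA : ℝ := (Fintype.card A : ℝ)⁻¹ with huA
  set uB : ℝ := (Fintype.card B : ℝ)⁻¹ with huB
  set uC : ℝ := (Fintype.card C : ℝ)⁻¹ with huC
  have cardA : (Fintype.card A : ℝ) ≠ 0 := by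
    exact_mod_cast Fintype.card_ne_zero
  have cardB : (Fintype.card B : ℝ) ≠ 0 := by
    exact_mod_cast Fintype.card_ne_zero
  have cardC : (Fintype.card C : ℝ) ≠ 0 := by
    exact_mod_cast Fintype.card_ne_zero
  have huA0 : 0 ≤ uA := by positivity
  have huB0 : 0 ≤ uB := by positivity
  have huC0 : 0 ≤ uC := by positivity
  have hsumA : ∑ _a : A, uA = 1 := by
    rw [Finset.sum_const, Finset.card_univ, nsmul_eq_mul, huA, mul_inv_cancel₀ cardA]
  have hsumB : ∑ _b : B, uB = 1 := by
    rw [Finset.sum_const, Finset.card_univ, nsmul_eq_mul, huB, mul_inv_cancel₀ cardB]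
  have hsumC : ∑ _c : C, uC = 1 := by
    rw [Finset.sum_const, Finset.card_univ, nsmul_eq_mul, huC, mul_inv_cancel₀ cardC]
  -- the uniform distribution
  set u : A × B × C → ℝ := fun _ => uA * uB * uC with hu
  have hu_mem : u ∈ F := by
    have := evans_mem (A := A) (B := B) (C := C) (nΛ := 1) (nM := 1)
      (fun _ => 1) (fun _ => 1) (fun _ _ _ => uA) (fun _ _ _ => uB) (fun _ _ _ => uC)
      (fun _ => zero_le_one) (by simp) (fun _ => zero_le_one) (by simp)
      (fun _ _ _ => huA0) (fun _ _ => hsumA)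
      (fun _ _ _ => huB0) (fun _ _ => hsumB)
      (fun _ _ _ => huC0) (fun _ _ => hsumC)
    convert this using 2 with x
    simp [hu]
  refine ⟨u, hu_mem, ?_⟩
  rintro p ⟨hp0, hp1, nΛ, nM, qΛ, qM, kA, kB, kC, hqΛ0, hqΛ, hqM0, hqM,
    hkA0, hkA, hkB0, hkB, hkC0, hkC, hfact⟩
  -- interpolated kernels
  set kAt : ℝ → B → Fin nΛ → A → ℝ := fun t b l a => (1 - t) * kA b l a + t * uA with hkAt
  set kBt : ℝ → Fin nΛ → Fin nM → B → ℝ := fun t l m b => (1 - t) * kB l m b + t * uB with hkBt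
  set kCt : ℝ → B → Fin nM → C → ℝ := fun t b m c => (1 - t) * kC b m c + t * uC with hkCt
  set f : ℝ → (A × B × C) → ℝ := fun t x => ∑ l, ∑ m,
      qΛ l * qM m * kAt t x.2.1 l x.1 * kBt t l m x.2.1 * kCt t x.2.1 m x.2.2 with hf
  have hcont : Continuous f := by
    apply continuous_pi
    intro x
    apply continuous_finset_sum
    intro l _
    apply continuous_finset_sum
    intro m _
    simp only [hkAt, hkBt, hkCt]
    fun_prop
  have hf0 : f 0 = p := by
    funext x
    obtain ⟨a, b, c⟩ := x
    rw [hf]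
    simp only [hkAt, hkBt, hkCt, sub_zero, one_mul, zero_mul, add_zero]
    exact (hfact a b c).symm
  have hf1 : f 1 = u := by
    funext x
    rw [hf, hu]
    simp only [hkAt, hkBt, hkCt, sub_self, zero_mul, one_mul, zero_add]
    have : ∀ l : Fin nΛ, ∀ m : Fin nM,
        qΛ l * qM m * uA * uB * uC = (uA * uB * uC) * (qΛ l * qM m) := fun l m => by ring
    simp_rw [this, ← Finset.mul_sum, hqM, mul_one, hqΛ, mul_one]
  have hmem : ∀ t : ℝ, 0 ≤ t → t ≤ 1 → f t ∈ F := by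
    intro t ht0 ht1
    have h1t : 0 ≤ 1 - t := by linarith
    refine evans_mem qΛ qM (kAt t) (kBt t) (kCt t) hqΛ0 hqΛ hqM0 hqM
      ?_ ?_ ?_ ?_ ?_ ?_
    · intro b l a
      exact add_nonneg (mul_nonneg h1t (hkA0 b l a)) (mul_nonneg ht0 huA0)
    · intro b l
      simp only [hkAt, Finset.sum_add_distrib, ← Finset.mul_sum, hkA, hsumA]
      ring
    · intro l m b
      exact add_nonneg (mul_nonneg h1t (hkB0 l m b)) (mul_nonneg ht0 huB0)
    · intro l m
      simp only [hkBt, Finset.sum_add_distrib, ← Finset.mul_sum, hkB, hsumB]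
      ring
    · intro b m c
      exact add_nonneg (mul_nonneg h1t (hkC0 b m c)) (mul_nonneg ht0 huC0)
    · intro b m
      simp only [hkCt, Finset.sum_add_distrib, ← Finset.mul_sum, hkC, hsumC]
      ring
  refine JoinedIn.symm ⟨⟨⟨fun t => f t, hcont.comp continuous_subtype_val⟩, hf0, hf1⟩, ?_⟩
  intro t
  exact hmem t t.2.1 t.2.2
end

section
/- Let p_E be a distribution on A × B × C that is not Evans-classical. Then every conditional distribution p_B(a,b,c|x,z) with setting sets X = Z = B satisfying p_B(a,b,c | x=b, z=b) = p_E(a,b,c) fails to be bilocal-classical. In other words, non-bilocality of every bilocal-scenario extension is a necessary condition for non-classicality in the Evans scenario. -/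
open Finset

/-- If `p_E` is not Evans-classical, then every conditional distribution
`p_B(a,b,c|x,z)` with settings `X = Z = B` satisfying `p_B(a,b,c|x=b,z=b) = p_E(a,b,c)`
fails to be bilocal-classical. -/
theorem not_evansClassical_implies_no_bilocal_extension
    {A B C : Type*} [Fintype A] [Fintype B] [Fintype C]
    [Nonempty A] [Nonempty B] [Nonempty C]
    (pE : A → B → C → ℝ)
    (hp0 : ∀ a b c, 0 ≤ pE a b c)
    (hp1 : ∑ a, ∑ b, ∑ c, pE a b c = 1)
    (hNC : ¬ IsEvansClassical pE) :
    ∀ pB : A → B → C → B → B → ℝ,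
      (∀ a b c x z, 0 ≤ pB a b c x z) →
      (∀ x z, ∑ a, ∑ b, ∑ c, pB a b c x z = 1) →
      (∀ a b c, pB a b c b b = pE a b c) →
      ¬ IsBilocalClassical pB := by
  intro pB _ _ hext hBL
  apply hNC
  obtain ⟨nΛ, nM, qΛ, qM, kA, kB, kC, h1, h2, h3, h4, h5, h6, h7, h8, h9, h10, h11⟩ := hBL
  exact ⟨nΛ, nM, qΛ, qM, kA, kB, kC, h1, h2, h3, h4, h5, h6, h7, h8, h9, h10,
    fun a b c => (hext a b c) ▸ (h11 a b c b b)⟩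
end

section
/- Fix d ≥ 1, finite outcome sets A and C, and set B = (ℤ/d) × (ℤ/d). Let ν range over N = (ℤ/d) × (ℤ/d), let p_N be a probability distribution on N, and let f : B × N → A and g : B × N → C be functions. Then the distribution p(a,b,c) = (1/d²) Σ_{ν∈N} [a = f(b,ν)]·[c = g(b,ν)]·p_N(ν) (where [·] is the indicator) is Evans-classical; a witnessing model is obtained by taking Λ = M = ℤ/d uniform, p(b | λ, μ) = p_N((λ + b₁, μ + b₂)) for b = (b₁,b₂), and response functions f'(b,λ) = f(b, (λ − b₁, ·)) and g'(b,μ) = g(b, (·, μ − b₂)) shifted modulo d. -/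
open Finset

theorem IsEvansClassical.of_latent {A B C Λ M : Type*} [Fintype A] [Fintype B] [Fintype C]
    [Fintype Λ] [Fintype M] {p : A → B → C → ℝ} (qΛ : Λ → ℝ) (qM : M → ℝ)
    (kA : B → Λ → A → ℝ) (kB : Λ → M → B → ℝ) (kC : B → M → C → ℝ)
    (hqΛ0 : ∀ l, 0 ≤ qΛ l) (hqΛ1 : ∑ l, qΛ l = 1)
    (hqM0 : ∀ m, 0 ≤ qM m) (hqM1 : ∑ m, qM m = 1)
    (hkA0 : ∀ b l a, 0 ≤ kA b l a) (hkA1 : ∀ b l, ∑ a, kA b l a = 1)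
    (hkB0 : ∀ l m b, 0 ≤ kB l m b) (hkB1 : ∀ l m, ∑ b, kB l m b = 1)
    (hkC0 : ∀ b m c, 0 ≤ kC b m c) (hkC1 : ∀ b m, ∑ c, kC b m c = 1)
    (hp : ∀ a b c, p a b c = ∑ l, ∑ m, qΛ l * qM m * kA b l a * kB l m b * kC b m c) :
    IsEvansClassical p := by
  let eΛ := (Fintype.equivFin Λ).symm
  let eM := (Fintype.equivFin M).symm
  refine ⟨_, _, fun l => qΛ (eΛ l), fun m => qM (eM m), fun b l => kA b (eΛ l),
    fun l m => kB (eΛ l) (eM m), fun b m => kC b (eM m), fun _ => hqΛ0 _,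
    by rwa [eΛ.sum_comp], fun _ => hqM0 _, by rwa [eM.sum_comp], fun b _ => hkA0 b _,
    fun b _ => hkA1 b _, fun _ _ => hkB0 _ _, fun _ _ => hkB1 _ _, fun b _ => hkC0 b _,
    fun b _ => hkC1 b _, fun a b c => ?_⟩
  rw [hp, ← eΛ.sum_comp]
  exact sum_congr rfl fun l _ => (eM.sum_comp _).symm

/-- Model: `λ := ν ∼ pN`, `μ` uniform and `b := λ - μ`, which is uniform and independent of `λ`.
The response `c` sees `(b, μ)`, hence `λ = b + μ`, so it can depend on `ν` as well. -/
theorem isEvansClassical_uniform_shared_randomness {A C G : Type*} [Fintype A] [Fintype C]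
    [DecidableEq A] [DecidableEq C] [AddGroup G] [Fintype G] [DecidableEq G]
    (pN : G → ℝ) (hpN0 : ∀ ν, 0 ≤ pN ν) (hpN1 : ∑ ν, pN ν = 1) (f : G → G → A) (g : G → G → C) :
    IsEvansClassical (fun (a : A) (b : G) (c : C) =>
      (1 / (Fintype.card G : ℝ)) *
        ∑ ν, (if a = f b ν then (1 : ℝ) else 0) * (if c = g b ν then (1 : ℝ) else 0) * pN ν) := by
  have hcard : (Fintype.card G : ℝ) ≠ 0 := Nat.cast_ne_zero.mpr Fintype.card_ne_zero
  refine .of_latent pN (fun _ : G => 1 / (Fintype.card G : ℝ))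
    (fun b l a => if a = f b l then 1 else 0) (fun l m b => if b = l - m then 1 else 0)
    (fun b m c => if c = g b (b + m) then 1 else 0) hpN0 hpN1 (fun _ => by positivity) ?_
    (fun _ _ _ => by positivity) (fun _ _ => by simp) (fun _ _ _ => by positivity)
    (fun _ _ => by simp) (fun _ _ _ => by positivity) (fun _ _ => by simp) fun a b c => ?_
  · simp [hcard]
  · rw [mul_sum]
    refine sum_congr rfl fun l _ => ?_
    have hm (m : G) : b = l - m ↔ m = -b + l := by
      rw [eq_sub_iff_add_eq, eq_neg_add_iff_add_eq]
    rw [Fintype.sum_eq_single (-b + l) fun m hm' => by simp [hm, hm'], if_pos ((hm _).mpr rfl),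
      add_neg_cancel_left]
    ring

theorem shared_nu_strategy_is_evansClassical_general
    {A C : Type*} [Fintype A] [Fintype C]
    [DecidableEq A] [DecidableEq C]
    (d : ℕ) [NeZero d]
    (pN : ZMod d × ZMod d → ℝ)
    (hpN0 : ∀ ν, 0 ≤ pN ν) (hpN1 : ∑ ν, pN ν = 1)
    (f : ZMod d × ZMod d → ZMod d × ZMod d → A)
    (g : ZMod d × ZMod d → ZMod d × ZMod d → C) :
    IsEvansClassical (fun (a : A) (b : ZMod d × ZMod d) (c : C) =>
      (1 / (d : ℝ) ^ 2) *
        ∑ ν : ZMod d × ZMod d,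
          (if a = f b ν then (1 : ℝ) else 0) * (if c = g b ν then (1 : ℝ) else 0) * pN ν) := by
  have hcard : (Fintype.card (ZMod d × ZMod d) : ℝ) = (d : ℝ) ^ 2 := by
    rw [Fintype.card_prod, ZMod.card]
    push_cast
    ring
  simpa only [hcard] using isEvansClassical_uniform_shared_randomness pN hpN0 hpN1 f g

/-- Fix `d ≥ 1` (via `NeZero d`), outcome sets `A`, `C`, and
`B = N = (ℤ/d) × (ℤ/d)`. For any distribution `p_N` on `N` and response functions
`f : B → N → A`, `g : B → N → C`, the distribution
`p(a,b,c) = (1/d²) Σ_ν [a = f(b,ν)]·[c = g(b,ν)]·p_N(ν)` is Evans-classical. -/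
theorem shared_nu_strategy_is_evansClassical
    {A C : Type*} [Fintype A] [Fintype C] [Nonempty A] [Nonempty C]
    [DecidableEq A] [DecidableEq C]
    (d : ℕ) [NeZero d]
    (pN : ZMod d × ZMod d → ℝ)
    (hpN0 : ∀ ν, 0 ≤ pN ν) (hpN1 : ∑ ν, pN ν = 1)
    (f : ZMod d × ZMod d → ZMod d × ZMod d → A)
    (g : ZMod d × ZMod d → ZMod d × ZMod d → C) :
    IsEvansClassical (fun (a : A) (b : ZMod d × ZMod d) (c : C) =>
      (1 / (d : ℝ) ^ 2) *
        ∑ ν : ZMod d × ZMod d,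
          (if a = f b ν then (1 : ℝ) else 0) * (if c = g b ν then (1 : ℝ) else 0) * pN ν) :=
  shared_nu_strategy_is_evansClassical_general d pN hpN0 hpN1 f g
end

section
/- A distribution p(a,b,c) on A × B × C is Evans-classical if and only if there exists a nonnegative function q on A^B × B × C^B (i.e., on tuples (a_0,…,a_{|B|−1}, b, c_0,…,c_{|B|−1}) where a_i ∈ A and c_j ∈ C for each b-value) such that: (i) for all a, b, c, summing q over all coordinates a_i with i ≠ b and c_j with j ≠ b, with a_b = a and c_b = c fixed, gives p(a,b,c); (ii) the marginal q(a_0,…,a_{|B|−1}, c_0,…,c_{|B|−1}) obtained by summing over b factorizes as the product of its two marginals q(a_0,…,a_{|B|−1})·q(c_0,…,c_{|B|−1}); and (iii) q is normalized, Σ q = 1. -/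
open Finset

lemma sum_pi_prod {B A : Type*} [Fintype B] [Fintype A] [DecidableEq B] (g : B → A → ℝ) :
    ∑ f : B → A, ∏ b, g b (f b) = ∏ b, ∑ x, g b x := by
  rw [Finset.prod_univ_sum, Fintype.piFinset_univ]

lemma sum_pi_prod_fix {B A : Type*} [Fintype B] [Fintype A] [DecidableEq B] [DecidableEq A]
    (g : B → A → ℝ) (hg : ∀ b, ∑ x, g b x = 1) (b : B) (a : A) :
    ∑ f : B → A, (if f b = a then ∏ b', g b' (f b') else 0) = g b a := by
  have h : ∀ f : B → A, (if f b = a then ∏ b', g b' (f b') else 0)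
      = ∏ b', (if b' = b then (if f b' = a then g b' (f b') else 0) else g b' (f b')) := by
    intro f
    by_cases hf : f b = a
    · simp only [hf, if_true]
      apply Finset.prod_congr rfl
      intro b' _
      by_cases hb : b' = b <;> simp [hb, hf]
    · simp only [hf, if_false]
      symm
      apply Finset.prod_eq_zero (Finset.mem_univ b)
      simp [hf]
  simp only [h]
  rw [sum_pi_prod (fun b' x => if b' = b then (if x = a then g b' x else 0) else g b' x),
    Finset.prod_eq_single b]
  · simp
  · intro b' _ hb'; simp [hb', hg b']
  · simp

lemma sum3_comm {X ι κ : Type*} [Fintype X] [Fintype ι] [Fintype κ] (f : X → ι → κ → ℝ) :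
    ∑ x, ∑ l, ∑ m, f x l m = ∑ l, ∑ m, ∑ x, f x l m := by
  rw [Finset.sum_comm]
  exact Finset.sum_congr rfl fun l _ => Finset.sum_comm

lemma sum4_comm {X Y ι κ : Type*} [Fintype X] [Fintype Y] [Fintype ι] [Fintype κ]
    (f : ι → κ → X → Y → ℝ) :
    ∑ x, ∑ y, ∑ l, ∑ m, f l m x y = ∑ l, ∑ m, ∑ x, ∑ y, f l m x y := by
  calc ∑ x, ∑ y, ∑ l, ∑ m, f l m x y
      = ∑ x, ∑ l, ∑ y, ∑ m, f l m x y := Finset.sum_congr rfl (fun x _ => Finset.sum_comm)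
    _ = ∑ l, ∑ x, ∑ y, ∑ m, f l m x y := Finset.sum_comm
    _ = ∑ l, ∑ x, ∑ m, ∑ y, f l m x y :=
        Finset.sum_congr rfl (fun l _ => Finset.sum_congr rfl (fun x _ => Finset.sum_comm))
    _ = ∑ l, ∑ m, ∑ x, ∑ y, f l m x y := Finset.sum_congr rfl (fun l _ => Finset.sum_comm)

lemma sum_sum_mul {X Y : Type*} [Fintype X] [Fintype Y] (c : ℝ) (F : X → ℝ) (G : Y → ℝ) :
    ∑ x, ∑ y, c * (F x * G y) = c * ((∑ x, F x) * (∑ y, G y)) := by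
  rw [Fintype.sum_mul_sum, Finset.mul_sum]
  refine Finset.sum_congr rfl fun x _ => ?_
  rw [Finset.mul_sum]

lemma sum_factor {X ι κ : Type*} [Fintype X] [Fintype ι] [Fintype κ]
    (f : ι → ℝ) (g : κ → ℝ) (h : ι → κ → X → ℝ) (hh : ∀ l m, ∑ x, h l m x = 1) :
    ∑ x, ∑ l, ∑ m, f l * g m * h l m x = (∑ l, f l) * (∑ m, g m) := by
  rw [sum3_comm, Fintype.sum_mul_sum]
  refine Finset.sum_congr rfl fun l _ => Finset.sum_congr rfl fun m _ => ?_
  rw [← Finset.mul_sum, hh, mul_one]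

lemma sum_factor2 {X Y ι κ : Type*} [Fintype X] [Fintype Y] [Fintype ι] [Fintype κ]
    (f : ι → ℝ) (g : κ → ℝ) (h : ι → κ → X → ℝ) (k : κ → Y → ℝ)
    (hh : ∀ l m, ∑ x, h l m x = 1) (hk : ∀ m, ∑ y, k m y = 1) :
    ∑ x, ∑ y, ∑ l, ∑ m, f l * g m * h l m x * k m y = (∑ l, f l) * (∑ m, g m) := by
  rw [sum4_comm, Fintype.sum_mul_sum]
  refine Finset.sum_congr rfl fun l _ => Finset.sum_congr rfl fun m _ => ?_
  have e : ∀ x y, f l * g m * h l m x * k m y = (f l * g m) * (h l m x * k m y) := by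
    intros; ring
  simp only [e]
  rw [sum_sum_mul, hh, hk, mul_one, mul_one]

lemma sum_factor2' {X Y ι κ : Type*} [Fintype X] [Fintype Y] [Fintype ι] [Fintype κ]
    (f : ι → ℝ) (g : κ → ℝ) (h : ι → κ → X → ℝ) (k : ι → Y → ℝ)
    (hh : ∀ l m, ∑ x, h l m x = 1) (hk : ∀ l, ∑ y, k l y = 1) :
    ∑ x, ∑ y, ∑ l, ∑ m, f l * g m * h l m x * k l y = (∑ l, f l) * (∑ m, g m) := by
  rw [sum4_comm, Fintype.sum_mul_sum]
  refine Finset.sum_congr rfl fun l _ => Finset.sum_congr rfl fun m _ => ?_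
  have e : ∀ x y, f l * g m * h l m x * k l y = (f l * g m) * (h l m x * k l y) := by
    intros; ring
  simp only [e]
  rw [sum_sum_mul, hh, hk, mul_one, mul_one]

/-- A distribution `p(a,b,c)` is Evans-classical iff there is a
nonnegative `q` on `A^B × B × C^B` such that: (i) summing `q` over all coordinates
`a_i`, `c_j` with `i, j ≠ b`, while fixing `a_b = a` and `c_b = c`, recovers `p(a,b,c)`;
(ii) the marginal of `q` over `b` factorizes as the product of its `A^B`- and
`C^B`-marginals; (iii) `q` is normalized. -/
theorem evansClassical_iff_fine
    {A B C : Type*} [Fintype A] [Fintype B] [Fintype C]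
    [DecidableEq A] [DecidableEq B] [DecidableEq C]
    [Nonempty A] [Nonempty B] [Nonempty C]
    (p : A → B → C → ℝ)
    (hp0 : ∀ a b c, 0 ≤ p a b c)
    (hp1 : ∑ a, ∑ b, ∑ c, p a b c = 1) :
    IsEvansClassical p ↔
      ∃ q : (B → A) → B → (B → C) → ℝ,
        (∀ av b cv, 0 ≤ q av b cv) ∧
        (∀ a b c, (∑ av : B → A, ∑ cv : B → C,
            if av b = a ∧ cv b = c then q av b cv else 0) = p a b c) ∧
        (∀ av cv, (∑ b, q av b cv) =
            (∑ b, ∑ cv' : B → C, q av b cv') * (∑ b, ∑ av' : B → A, q av' b cv)) ∧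
        (∑ av : B → A, ∑ b, ∑ cv : B → C, q av b cv = 1) := by
  classical
  constructor
  · rintro ⟨nΛ, nM, qΛ, qM, kA, kB, kC, hqΛ0, hqΛ1, hqM0, hqM1, hkA0, hkA1,
      hkB0, hkB1, hkC0, hkC1, hp⟩
    refine ⟨fun av b cv => ∑ l, ∑ m, qΛ l * qM m * kB l m b *
      ((∏ b', kA b' l (av b')) * ∏ b', kC b' m (cv b')), ?_, ?_, ?_, ?_⟩
    · intro av b cv
      refine Finset.sum_nonneg fun l _ => Finset.sum_nonneg fun m _ => ?_
      refine mul_nonneg (mul_nonneg (mul_nonneg (hqΛ0 l) (hqM0 m)) (hkB0 l m b))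
        (mul_nonneg (Finset.prod_nonneg fun b' _ => hkA0 b' l (av b'))
          (Finset.prod_nonneg fun b' _ => hkC0 b' m (cv b')))
    · intro a b c
      have key : ∀ (av : B → A) (cv : B → C),
          (if av b = a ∧ cv b = c then (∑ l, ∑ m, qΛ l * qM m * kB l m b *
            ((∏ b', kA b' l (av b')) * ∏ b', kC b' m (cv b'))) else 0)
          = ∑ l, ∑ m, qΛ l * qM m * kB l m b *
            ((if av b = a then ∏ b', kA b' l (av b') else 0) *
             (if cv b = c then ∏ b', kC b' m (cv b') else 0)) := by
        intro av cv
        by_cases h1 : av b = a <;> by_cases h2 : cv b = c <;> simp [h1, h2]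
      simp only [key]
      rw [sum4_comm, hp a b c]
      refine Finset.sum_congr rfl fun l _ => Finset.sum_congr rfl fun m _ => ?_
      rw [sum_sum_mul (qΛ l * qM m * kB l m b)
        (fun av : B → A => if av b = a then ∏ b', kA b' l (av b') else 0)
        (fun cv : B → C => if cv b = c then ∏ b', kC b' m (cv b') else 0),
        sum_pi_prod_fix (fun b' x => kA b' l x) (fun b' => hkA1 b' l) b a,
        sum_pi_prod_fix (fun b' x => kC b' m x) (fun b' => hkC1 b' m) b c]
      ring
    · intro av cv
      have hL : ∑ b, ∑ l, ∑ m, qΛ l * qM m * kB l m b *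
            ((∏ b', kA b' l (av b')) * ∏ b', kC b' m (cv b'))
          = (∑ l, qΛ l * ∏ b', kA b' l (av b')) * (∑ m, qM m * ∏ b', kC b' m (cv b')) := by
        have e : ∀ (b : B) (l : Fin nΛ) (m : Fin nM),
            qΛ l * qM m * kB l m b * ((∏ b', kA b' l (av b')) * ∏ b', kC b' m (cv b'))
            = (qΛ l * ∏ b', kA b' l (av b')) * (qM m * ∏ b', kC b' m (cv b')) * kB l m b := by
          intros; ring
        simp only [e]
        exact sum_factor _ _ _ hkB1
      have hM1 : ∑ b, ∑ cv' : B → C, ∑ l, ∑ m, qΛ l * qM m * kB l m b *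
            ((∏ b', kA b' l (av b')) * ∏ b', kC b' m (cv' b'))
          = ∑ l, qΛ l * ∏ b', kA b' l (av b') := by
        have e : ∀ (b : B) (cv' : B → C) (l : Fin nΛ) (m : Fin nM),
            qΛ l * qM m * kB l m b * ((∏ b', kA b' l (av b')) * ∏ b', kC b' m (cv' b'))
            = (qΛ l * ∏ b', kA b' l (av b')) * qM m * kB l m b * ∏ b', kC b' m (cv' b') := by
          intros; ring
        simp only [e]
        rw [sum_factor2 _ _ _ _ hkB1 (fun m => by
          rw [sum_pi_prod (fun b' x => kC b' m x)]; simp [hkC1]), hqM1, mul_one]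
      have hM2 : ∑ b, ∑ av' : B → A, ∑ l, ∑ m, qΛ l * qM m * kB l m b *
            ((∏ b', kA b' l (av' b')) * ∏ b', kC b' m (cv b'))
          = ∑ m, qM m * ∏ b', kC b' m (cv b') := by
        have e : ∀ (b : B) (av' : B → A) (l : Fin nΛ) (m : Fin nM),
            qΛ l * qM m * kB l m b * ((∏ b', kA b' l (av' b')) * ∏ b', kC b' m (cv b'))
            = qΛ l * (qM m * ∏ b', kC b' m (cv b')) * kB l m b * ∏ b', kA b' l (av' b') := by
          intros; ring
        simp only [e]
        rw [sum_factor2' _ _ _ _ hkB1 (fun l => by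
          rw [sum_pi_prod (fun b' x => kA b' l x)]; simp [hkA1]), hqΛ1, one_mul]
      rw [hL, hM1, hM2]
    · have e : ∀ (av : B → A) (b : B) (cv : B → C) (l : Fin nΛ) (m : Fin nM),
          qΛ l * qM m * kB l m b * ((∏ b', kA b' l (av b')) * ∏ b', kC b' m (cv b'))
          = (qΛ l * ∏ b', kA b' l (av b')) * qM m * kB l m b * ∏ b', kC b' m (cv b') := by
        intros; ring
      simp only [e]
      have step : ∀ av : B → A, ∑ b, ∑ cv : B → C, ∑ l, ∑ m,
          (qΛ l * ∏ b', kA b' l (av b')) * qM m * kB l m b * ∏ b', kC b' m (cv b')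
          = ∑ l, qΛ l * ∏ b', kA b' l (av b') := by
        intro av
        rw [sum_factor2 _ _ _ _ hkB1 (fun m => by
          rw [sum_pi_prod (fun b' x => kC b' m x)]; simp [hkC1]), hqM1, mul_one]
      simp only [step]
      rw [Finset.sum_comm]
      have : ∀ l : Fin nΛ, ∑ av : B → A, qΛ l * ∏ b', kA b' l (av b') = qΛ l := by
        intro l
        rw [← Finset.mul_sum, sum_pi_prod (fun b' x => kA b' l x)]
        simp [hkA1]
      simp only [this]
      exact hqΛ1
  · rintro ⟨q, hq0, hq1, hq2, hq3⟩
    let qA : (B → A) → ℝ := fun av => ∑ b, ∑ cv : B → C, q av b cv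
    let qC : (B → C) → ℝ := fun cv => ∑ b, ∑ av : B → A, q av b cv
    have hqA0 : ∀ av, 0 ≤ qA av := fun av =>
      Finset.sum_nonneg fun b _ => Finset.sum_nonneg fun cv _ => hq0 av b cv
    have hqC0 : ∀ cv, 0 ≤ qC cv := fun cv =>
      Finset.sum_nonneg fun b _ => Finset.sum_nonneg fun av _ => hq0 av b cv
    have hqzero : ∀ av b cv, qA av * qC cv = 0 → q av b cv = 0 := by
      intro av b cv h
      rcases mul_eq_zero.1 h with h | h
      · have h' := (Finset.sum_eq_zero_iff_of_nonneg
          (fun b _ => Finset.sum_nonneg fun cv _ => hq0 av b cv)).1 h b (Finset.mem_univ b)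
        exact (Finset.sum_eq_zero_iff_of_nonneg
          (fun cv _ => hq0 av b cv)).1 h' cv (Finset.mem_univ cv)
      · have h' := (Finset.sum_eq_zero_iff_of_nonneg
          (fun b _ => Finset.sum_nonneg fun av _ => hq0 av b cv)).1 h b (Finset.mem_univ b)
        exact (Finset.sum_eq_zero_iff_of_nonneg
          (fun av _ => hq0 av b cv)).1 h' av (Finset.mem_univ av)
    have hsum_b : ∀ av cv, ∑ b, q av b cv = qA av * qC cv := fun av cv => hq2 av cv
    have hcardB : (Fintype.card B : ℝ) ≠ 0 := by
      exact_mod_cast Fintype.card_ne_zero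
    let eA := Fintype.equivFin (B → A)
    let eC := Fintype.equivFin (B → C)
    refine ⟨Fintype.card (B → A), Fintype.card (B → C),
      fun l => qA (eA.symm l), fun m => qC (eC.symm m),
      fun b l a => if eA.symm l b = a then 1 else 0,
      fun l m b => if qA (eA.symm l) * qC (eC.symm m) = 0 then (Fintype.card B : ℝ)⁻¹
        else q (eA.symm l) b (eC.symm m) / (qA (eA.symm l) * qC (eC.symm m)),
      fun b m c => if eC.symm m b = c then 1 else 0,
      fun l => hqA0 _, ?_, fun m => hqC0 _, ?_, ?_, ?_, ?_, ?_, ?_, ?_, ?_⟩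
    · rw [Equiv.sum_comp eA.symm qA]
      exact hq3
    · rw [Equiv.sum_comp eC.symm qC]
      calc ∑ cv : B → C, ∑ b, ∑ av : B → A, q av b cv
          = ∑ b, ∑ cv : B → C, ∑ av : B → A, q av b cv := Finset.sum_comm
        _ = ∑ b, ∑ av : B → A, ∑ cv : B → C, q av b cv :=
            Finset.sum_congr rfl fun b _ => Finset.sum_comm
        _ = ∑ av : B → A, ∑ b, ∑ cv : B → C, q av b cv := Finset.sum_comm
        _ = 1 := hq3
    · intro b l a
      dsimp only
      split <;> norm_num
    · intro b l
      simp
    · intro l m b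
      dsimp only
      split
      · positivity
      · exact div_nonneg (hq0 _ _ _) (mul_nonneg (hqA0 _) (hqC0 _))
    · intro l m
      by_cases hD : qA (eA.symm l) * qC (eC.symm m) = 0
      · simp only [if_pos hD, Finset.sum_const, Finset.card_univ, nsmul_eq_mul]
        exact mul_inv_cancel₀ hcardB
      · simp only [if_neg hD]
        rw [← Finset.sum_div, hsum_b, div_self hD]
    · intro b m c
      dsimp only
      split <;> norm_num
    · intro b m
      simp
    · intro a b c
      rw [← hq1 a b c]
      rw [← Equiv.sum_comp eA.symm
        (fun av => ∑ cv : B → C, if av b = a ∧ cv b = c then q av b cv else 0)]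
      refine Finset.sum_congr rfl fun l _ => ?_
      rw [← Equiv.sum_comp eC.symm
        (fun cv => if (eA.symm l) b = a ∧ cv b = c then q (eA.symm l) b cv else 0)]
      refine Finset.sum_congr rfl fun m _ => ?_
      show (if (eA.symm l) b = a ∧ (eC.symm m) b = c then q (eA.symm l) b (eC.symm m) else 0)
        = qA (eA.symm l) * qC (eC.symm m) * (if eA.symm l b = a then 1 else 0) *
          (if qA (eA.symm l) * qC (eC.symm m) = 0 then (Fintype.card B : ℝ)⁻¹
            else q (eA.symm l) b (eC.symm m) / (qA (eA.symm l) * qC (eC.symm m))) *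
          (if eC.symm m b = c then 1 else 0)
      set av := eA.symm l
      set cv := eC.symm m
      by_cases hD : qA av * qC cv = 0
      · rw [if_pos hD]
        have hz : q av b cv = 0 := hqzero av b cv hD
        rcases mul_eq_zero.1 hD with h | h <;> simp [h, hz]
      · rw [if_neg hD]
        by_cases h1 : av b = a <;> by_cases h2 : cv b = c <;> simp [h1, h2]
        rw [mul_comm, div_mul_cancel₀ _ hD]
end

section
/- Let A = {0,1,2}, B = C = {0,1}, and define f(0,b) = 0, f(1,b) = b, f(2,b) = b+1 mod 2. The distribution p(a,b,c) = 1/6 if c = b + f(a,b) mod 2 and p(a,b,c) = 0 otherwise (i.e., the Bonet PR-box correlations p_PR(b,c|a) combined with the uniform marginal p_A(a) = 1/3) is Evans-classical. -/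
open Finset

/-- The wiring function of the Bonet PR-box: `f(0,b) = 0`, `f(1,b) = b`,
`f(2,b) = b + 1 (mod 2)`. -/
def fBonet (a : Fin 3) (b : Fin 2) : Fin 2 :=
  if a = 0 then 0 else if a = 1 then b else b + 1

/-- The Bonet PR-box conditional distribution: `p_PR(b,c|a) = 1/2` if
`c = b + f(a,b) mod 2` and `0` otherwise. -/
noncomputable def pPR (a : Fin 3) (b c : Fin 2) : ℝ :=
  if c = b + fBonet a b then 1 / 2 else 0

/-- The Bonet PR-box wired with the uniform input distribution
`p_A(a) = 1/3`, i.e. `p(a,b,c) = 1/6` if `c = b + f(a,b) mod 2` and `0` otherwise,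
is Evans-classical. -/
theorem uniform_bonet_prbox_is_evansClassical :
    IsEvansClassical (fun (a : Fin 3) (b c : Fin 2) => (1 / 3 : ℝ) * pPR a b c) := by
  refine ⟨2, 2, fun _ => 1 / 2, fun m => if m = 0 then 2 / 3 else 1 / 3,
    fun b l a =>
      if b = 0 then
        (if l = 0 then (if a = 2 then 0 else 1 / 2) else (if a = 2 then 1 else 0))
      else
        (if l = 0 then (if a = 1 then 1 else 0) else (if a = 1 then 0 else 1 / 2)),
    fun l m b => if b = l + m then 1 else 0,
    fun b m c => if c = b + m then 1 else 0,
    ?_, ?_, ?_, ?_, ?_, ?_, ?_, ?_, ?_, ?_, ?_⟩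
  · intro l; norm_num
  · norm_num [Fin.sum_univ_two]
  · intro m; dsimp only; split <;> norm_num
  · norm_num [Fin.sum_univ_two]
  · intro b l a
    dsimp only; split <;> split <;> split <;> norm_num
  · intro b l
    fin_cases b <;> fin_cases l <;>
      norm_num [Fin.sum_univ_three, show (0:Fin 3) ≠ 2 by decide,
        show (1:Fin 3) ≠ 2 by decide, show (2:Fin 3) ≠ 1 by decide]
  · intro l m b; dsimp only; split <;> norm_num
  · intro l m
    fin_cases l <;> fin_cases m <;> norm_num [Fin.sum_univ_two]
  · intro b m c; dsimp only; split <;> norm_num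
  · intro b m
    fin_cases b <;> fin_cases m <;> norm_num [Fin.sum_univ_two]
  · intro a b c
    fin_cases a <;> fin_cases b <;> fin_cases c <;>
      simp [pPR, fBonet, Fin.sum_univ_two] <;> norm_num
end

section
/- Let A = {0,1,2}, B = C = {0,1}, and let p_A(0) = p_A(2) = 10/21, p_A(1) = 1/21. The distribution p(a,b,c) = p_A(a)·p_PR(b,c|a), where p_PR is the Bonet PR-box, is NOT Evans-classical. -/
open Finset

/-- The asymmetric input distribution `p_A(0) = p_A(2) = 10/21`, `p_A(1) = 1/21`. -/
noncomputable def pAasym (a : Fin 3) : ℝ :=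
  if a = 1 then 1 / 21 else 10 / 21

private lemma dsum_zero {n m : ℕ} (f : Fin n → Fin m → ℝ)
    (h0 : ∀ i j, 0 ≤ f i j) (h : ∑ i, ∑ j, f i j = 0) (i : Fin n) (j : Fin m) :
    f i j = 0 := by
  have houter : ∀ i ∈ (univ : Finset (Fin n)), (0:ℝ) ≤ ∑ j, f i j :=
    fun i _ => sum_nonneg fun j _ => h0 i j
  have h1 : ∑ j, f i j = 0 :=
    (sum_eq_zero_iff_of_nonneg houter).mp h i (mem_univ i)
  exact (sum_eq_zero_iff_of_nonneg fun j _ => h0 i j).mp h1 j (mem_univ j)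

private lemma dsum_pos {n m : ℕ} (f : Fin n → Fin m → ℝ)
    (h0 : ∀ i j, 0 ≤ f i j) (h : 0 < ∑ i, ∑ j, f i j) :
    ∃ i j, 0 < f i j := by
  by_contra hc
  push_neg at hc
  have hle : ∑ i, ∑ j, f i j ≤ 0 :=
    sum_nonpos fun i _ => sum_nonpos fun j _ => hc i j
  linarith

private lemma pos4 {a b c d : ℝ} (ha : 0 ≤ a) (hb : 0 ≤ b) (hc : 0 ≤ c) (hd : 0 ≤ d)
    (h : 0 < a * b * (c * d)) : 0 < a ∧ 0 < b ∧ 0 < c ∧ 0 < d := by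
  refine ⟨?_, ?_, ?_, ?_⟩
  · rcases ha.lt_or_eq with h' | h'
    · exact h'
    · exfalso; rw [← h'] at h; simp at h
  · rcases hb.lt_or_eq with h' | h'
    · exact h'
    · exfalso; rw [← h'] at h; simp at h
  · rcases hc.lt_or_eq with h' | h'
    · exact h'
    · exfalso; rw [← h'] at h; simp at h
  · rcases hd.lt_or_eq with h' | h'
    · exact h'
    · exfalso; rw [← h'] at h; simp at h

set_option maxHeartbeats 2000000 in
/-- The Bonet PR-box wired with the asymmetric input distribution
`p_A(0) = p_A(2) = 10/21`, `p_A(1) = 1/21` is NOT Evans-classical. -/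
theorem asym_bonet_prbox_not_evansClassical :
    ¬ IsEvansClassical (fun (a : Fin 3) (b c : Fin 2) => pAasym a * pPR a b c) := by
  rintro ⟨nΛ, nM, qΛ, qM, kA, kB, kC, hqΛ0, hqΛ1, hqM0, hqM1,
    hkA0, hkA1, hkB0, hkB1, hkC0, hkC1, hp⟩
  have hp' : ∀ (a : Fin 3) (b c : Fin 2), pAasym a * pPR a b c
      = ∑ l, ∑ m, qΛ l * qM m * kA b l a * kB l m b * kC b m c := hp
  -- normalization in expanded form
  have hkA3 : ∀ (b : Fin 2) l, kA b l 0 + kA b l 1 + kA b l 2 = 1 := by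
    intro b l
    have := hkA1 b l
    rwa [Fin.sum_univ_three] at this
  have hkB2 : ∀ l m, kB l m 0 + kB l m 1 = 1 := by
    intro l m
    have := hkB1 l m
    rwa [Fin.sum_univ_two] at this
  have hkC2 : ∀ (b : Fin 2) m, kC b m 0 + kC b m 1 = 1 := by
    intro b m
    have := hkC1 b m
    rwa [Fin.sum_univ_two] at this
  -- zero constraints
  have hz : ∀ (a : Fin 3) (b c : Fin 2), pAasym a * pPR a b c = 0 →
      ∀ l m, qΛ l * qM m * kA b l a * kB l m b * kC b m c = 0 := by
    intro a b c h0 l m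
    refine dsum_zero _ (fun l m => ?_) ((hp' a b c).symm.trans h0) l m
    exact mul_nonneg (mul_nonneg (mul_nonneg (mul_nonneg (hqΛ0 l) (hqM0 m))
      (hkA0 b l a)) (hkB0 l m b)) (hkC0 b m c)
  -- pair lemmas
  have hpair0 : ∀ l m, 0 < qΛ l → 0 < qM m → 0 < kB l m 0 →
      kA 0 l 2 = kC 0 m 1 ∧ kA 0 l 2 * (1 - kA 0 l 2) = 0 := by
    intro l m hl hm hb
    have hpos : (0:ℝ) < qΛ l * qM m * kB l m 0 := by positivity
    have w1 := hz 0 0 1 (by unfold pAasym pPR; rw [if_neg (by decide : ¬(1:Fin 2) = 0 + fBonet 0 0)]; ring) l m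
    have w2 := hz 1 0 1 (by unfold pAasym pPR; rw [if_neg (by decide : ¬(1:Fin 2) = 0 + fBonet 1 0)]; ring) l m
    have w3 := hz 2 0 0 (by unfold pAasym pPR; rw [if_neg (by decide : ¬(0:Fin 2) = 0 + fBonet 2 0)]; ring) l m
    have e1 : kA 0 l 0 * kC 0 m 1 = 0 := by
      have h2 : (qΛ l * qM m * kB l m 0) * (kA 0 l 0 * kC 0 m 1) = 0 := by linear_combination w1
      exact (mul_eq_zero.mp h2).resolve_left (ne_of_gt hpos)
    have e2 : kA 0 l 1 * kC 0 m 1 = 0 := by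
      have h2 : (qΛ l * qM m * kB l m 0) * (kA 0 l 1 * kC 0 m 1) = 0 := by linear_combination w2
      exact (mul_eq_zero.mp h2).resolve_left (ne_of_gt hpos)
    have e3 : kA 0 l 2 * kC 0 m 0 = 0 := by
      have h2 : (qΛ l * qM m * kB l m 0) * (kA 0 l 2 * kC 0 m 0) = 0 := by linear_combination w3
      exact (mul_eq_zero.mp h2).resolve_left (ne_of_gt hpos)
    have sA := hkA3 0 l
    have sC := hkC2 0 m
    have heq : kA 0 l 2 = kC 0 m 1 := by
      linear_combination -e1 - e2 + e3 + kC 0 m 1 * sA - kA 0 l 2 * sC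
    exact ⟨heq, by linear_combination e3 - kA 0 l 2 * sC - kA 0 l 2 * heq⟩
  have hpair1 : ∀ l m, 0 < qΛ l → 0 < qM m → 0 < kB l m 1 →
      kA 1 l 1 = kC 1 m 0 ∧ kA 1 l 1 * (1 - kA 1 l 1) = 0 := by
    intro l m hl hm hb
    have hpos : (0:ℝ) < qΛ l * qM m * kB l m 1 := by positivity
    have w1 := hz 0 1 0 (by unfold pAasym pPR; rw [if_neg (by decide : ¬(0:Fin 2) = 1 + fBonet 0 1)]; ring) l m
    have w2 := hz 2 1 0 (by unfold pAasym pPR; rw [if_neg (by decide : ¬(0:Fin 2) = 1 + fBonet 2 1)]; ring) l m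
    have w3 := hz 1 1 1 (by unfold pAasym pPR; rw [if_neg (by decide : ¬(1:Fin 2) = 1 + fBonet 1 1)]; ring) l m
    have e1 : kA 1 l 0 * kC 1 m 0 = 0 := by
      have h2 : (qΛ l * qM m * kB l m 1) * (kA 1 l 0 * kC 1 m 0) = 0 := by linear_combination w1
      exact (mul_eq_zero.mp h2).resolve_left (ne_of_gt hpos)
    have e2 : kA 1 l 2 * kC 1 m 0 = 0 := by
      have h2 : (qΛ l * qM m * kB l m 1) * (kA 1 l 2 * kC 1 m 0) = 0 := by linear_combination w2
      exact (mul_eq_zero.mp h2).resolve_left (ne_of_gt hpos)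
    have e3 : kA 1 l 1 * kC 1 m 1 = 0 := by
      have h2 : (qΛ l * qM m * kB l m 1) * (kA 1 l 1 * kC 1 m 1) = 0 := by linear_combination w3
      exact (mul_eq_zero.mp h2).resolve_left (ne_of_gt hpos)
    have sA := hkA3 1 l
    have sC := hkC2 1 m
    have heq : kA 1 l 1 = kC 1 m 0 := by
      linear_combination -e1 - e2 + e3 + kC 1 m 0 * sA - kA 1 l 1 * sC
    exact ⟨heq, by linear_combination e3 - kA 1 l 1 * sC - kA 1 l 1 * heq⟩
  have hpair : ∀ l m, 0 < qΛ l → 0 < qM m →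
      (kA 0 l 2 = kC 0 m 1 ∧ kA 0 l 2 * (1 - kA 0 l 2) = 0) ∨
      (kA 1 l 1 = kC 1 m 0 ∧ kA 1 l 1 * (1 - kA 1 l 1) = 0) := by
    intro l m hl hm
    rcases lt_or_ge 0 (kB l m 0) with h | h
    · exact Or.inl (hpair0 l m hl hm h)
    · have h0 : kB l m 0 = 0 := le_antisymm h (hkB0 l m 0)
      have h1 : 0 < kB l m 1 := by have := hkB2 l m; linarith
      exact Or.inr (hpair1 l m hl hm h1)
  -- marginal sums over c
  have hsumab : ∀ (a : Fin 3) (b : Fin 2),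
      ∑ l, ∑ m, qΛ l * qM m * (kA b l a * kB l m b)
        = pAasym a * (pPR a b 0 + pPR a b 1) := by
    intro a b
    rw [mul_add, hp' a b 0, hp' a b 1, ← Finset.sum_add_distrib]
    refine Finset.sum_congr rfl fun l _ => ?_
    rw [← Finset.sum_add_distrib]
    refine Finset.sum_congr rfl fun m _ => ?_
    linear_combination (-(qΛ l * qM m * kA b l a * kB l m b)) * hkC2 b m
  -- numeric values
  have ev00 : pAasym 0 * (pPR 0 0 0 + pPR 0 0 1) = 5/21 := by
    unfold pAasym pPR
    rw [if_neg (by decide : ¬(0:Fin 3) = 1), if_pos (by decide : (0:Fin 2) = 0 + fBonet 0 0),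
      if_neg (by decide : ¬(1:Fin 2) = 0 + fBonet 0 0)]
    norm_num
  have ev10 : pAasym 1 * (pPR 1 0 0 + pPR 1 0 1) = 1/42 := by
    unfold pAasym pPR
    rw [if_pos (rfl : (1:Fin 3) = 1), if_pos (by decide : (0:Fin 2) = 0 + fBonet 1 0),
      if_neg (by decide : ¬(1:Fin 2) = 0 + fBonet 1 0)]
    norm_num
  have ev20 : pAasym 2 * (pPR 2 0 0 + pPR 2 0 1) = 5/21 := by
    unfold pAasym pPR
    rw [if_neg (by decide : ¬(2:Fin 3) = 1), if_neg (by decide : ¬(0:Fin 2) = 0 + fBonet 2 0),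
      if_pos (by decide : (1:Fin 2) = 0 + fBonet 2 0)]
    norm_num
  have ev01 : pAasym 0 * (pPR 0 1 0 + pPR 0 1 1) = 5/21 := by
    unfold pAasym pPR
    rw [if_neg (by decide : ¬(0:Fin 3) = 1), if_neg (by decide : ¬(0:Fin 2) = 1 + fBonet 0 1),
      if_pos (by decide : (1:Fin 2) = 1 + fBonet 0 1)]
    norm_num
  have ev11 : pAasym 1 * (pPR 1 1 0 + pPR 1 1 1) = 1/42 := by
    unfold pAasym pPR
    rw [if_pos (rfl : (1:Fin 3) = 1), if_pos (by decide : (0:Fin 2) = 1 + fBonet 1 1),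
      if_neg (by decide : ¬(1:Fin 2) = 1 + fBonet 1 1)]
    norm_num
  have ev21 : pAasym 2 * (pPR 2 1 0 + pPR 2 1 1) = 5/21 := by
    unfold pAasym pPR
    rw [if_neg (by decide : ¬(2:Fin 3) = 1), if_neg (by decide : ¬(0:Fin 2) = 1 + fBonet 2 1),
      if_pos (by decide : (1:Fin 2) = 1 + fBonet 2 1)]
    norm_num
  -- named marginal sums
  have hW2 : ∑ l, ∑ m, qΛ l * qM m * (kA 0 l 2 * kB l m 0) = 5/21 :=
    (hsumab 2 0).trans ev20
  have hV0 : ∑ l, ∑ m, qΛ l * qM m * (kA 1 l 0 * kB l m 1) = 5/21 :=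
    (hsumab 0 1).trans ev01
  have hV1 : ∑ l, ∑ m, qΛ l * qM m * (kA 1 l 1 * kB l m 1) = 1/42 :=
    (hsumab 1 1).trans ev11
  have hB0 : ∑ l, ∑ m, qΛ l * qM m * kB l m 0 = 1/2 := by
    have e : ∀ l m, qΛ l * qM m * kB l m 0
        = qΛ l * qM m * (kA 0 l 0 * kB l m 0) + qΛ l * qM m * (kA 0 l 1 * kB l m 0)
          + qΛ l * qM m * (kA 0 l 2 * kB l m 0) := by
      intro l m
      linear_combination (qΛ l * qM m * kB l m 0) * (hkA3 0 l).symm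
    calc ∑ l, ∑ m, qΛ l * qM m * kB l m 0
        = ∑ l, ∑ m, (qΛ l * qM m * (kA 0 l 0 * kB l m 0) + qΛ l * qM m * (kA 0 l 1 * kB l m 0)
          + qΛ l * qM m * (kA 0 l 2 * kB l m 0)) :=
          Finset.sum_congr rfl fun l _ => Finset.sum_congr rfl fun m _ => e l m
      _ = 1/2 := by
          simp only [Finset.sum_add_distrib]
          rw [hsumab 0 0, hsumab 1 0, hsumab 2 0, ev00, ev10, ev20]
          norm_num
  have hB1 : ∑ l, ∑ m, qΛ l * qM m * kB l m 1 = 1/2 := by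
    have e : ∀ l m, qΛ l * qM m * kB l m 1
        = qΛ l * qM m * (kA 1 l 0 * kB l m 1) + qΛ l * qM m * (kA 1 l 1 * kB l m 1)
          + qΛ l * qM m * (kA 1 l 2 * kB l m 1) := by
      intro l m
      linear_combination (qΛ l * qM m * kB l m 1) * (hkA3 1 l).symm
    calc ∑ l, ∑ m, qΛ l * qM m * kB l m 1
        = ∑ l, ∑ m, (qΛ l * qM m * (kA 1 l 0 * kB l m 1) + qΛ l * qM m * (kA 1 l 1 * kB l m 1)
          + qΛ l * qM m * (kA 1 l 2 * kB l m 1)) :=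
          Finset.sum_congr rfl fun l _ => Finset.sum_congr rfl fun m _ => e l m
      _ = 1/2 := by
          simp only [Finset.sum_add_distrib]
          rw [hsumab 0 1, hsumab 1 1, hsumab 2 1, ev01, ev11, ev21]
          norm_num
  have hT : ∑ l, ∑ m, qΛ l * qM m = 1 := by
    rw [← Finset.sum_mul_sum, hqΛ1, hqM1]; norm_num
  -- support congruence helper
  have hsupp : ∀ (F G : Fin nΛ → Fin nM → ℝ),
      (∀ l m, 0 < qΛ l → 0 < qM m → F l m = G l m) →
      ∑ l, ∑ m, qΛ l * qM m * F l m = ∑ l, ∑ m, qΛ l * qM m * G l m := by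
    intro F G h
    refine Finset.sum_congr rfl fun l _ => Finset.sum_congr rfl fun m _ => ?_
    rcases (hqΛ0 l).lt_or_eq with h1 | h1
    · rcases (hqM0 m).lt_or_eq with h2 | h2
      · rw [h l m h1 h2]
      · rw [← h2]; ring
    · rw [← h1]; ring
  -- witness pairs
  obtain ⟨l1, m1, hw1⟩ := dsum_pos (fun l m => qΛ l * qM m * (kA 1 l 1 * kB l m 1))
    (fun l m => mul_nonneg (mul_nonneg (hqΛ0 l) (hqM0 m))
      (mul_nonneg (hkA0 1 l 1) (hkB0 l m 1)))
    (by rw [hV1]; norm_num)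
  obtain ⟨hql1, hqm1, hε1pos, hβ11⟩ := pos4 (hqΛ0 l1) (hqM0 m1) (hkA0 1 l1 1) (hkB0 l1 m1 1) hw1
  obtain ⟨heq1, hidem1⟩ := hpair1 l1 m1 hql1 hqm1 hβ11
  have hε1 : kA 1 l1 1 = 1 := by
    rcases mul_eq_zero.mp hidem1 with h | h
    · linarith
    · linarith
  have hδ1 : kC 1 m1 0 = 1 := heq1 ▸ hε1
  obtain ⟨l0, m0, hw0⟩ := dsum_pos (fun l m => qΛ l * qM m * (kA 1 l 0 * kB l m 1))
    (fun l m => mul_nonneg (mul_nonneg (hqΛ0 l) (hqM0 m))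
      (mul_nonneg (hkA0 1 l 0) (hkB0 l m 1)))
    (by rw [hV0]; norm_num)
  obtain ⟨hql0, hqm0, hA10pos, hβ10⟩ := pos4 (hqΛ0 l0) (hqM0 m0) (hkA0 1 l0 0) (hkB0 l0 m0 1) hw0
  obtain ⟨heq0, hidem0⟩ := hpair1 l0 m0 hql0 hqm0 hβ10
  have hε0 : kA 1 l0 1 = 0 := by
    rcases mul_eq_zero.mp hidem0 with h | h
    · exact h
    · exfalso
      have := hkA3 1 l0
      have := hkA0 1 l0 2
      linarith
  have hδ0 : kC 1 m0 0 = 0 := heq0 ▸ hε0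
  -- the two reference values i1 = α(l1), i0 = α(l0)
  have hpl1m0 : kA 0 l1 2 = kC 0 m0 1 ∧ kA 0 l1 2 * (1 - kA 0 l1 2) = 0 := by
    rcases hpair l1 m0 hql1 hqm0 with h | h
    · exact h
    · exfalso; rw [hε1, hδ0] at h; norm_num at h
  have hpl0m1 : kA 0 l0 2 = kC 0 m1 1 ∧ kA 0 l0 2 * (1 - kA 0 l0 2) = 0 := by
    rcases hpair l0 m1 hql0 hqm1 with h | h
    · exact h
    · exfalso; rw [hε0, hδ1] at h; norm_num at h
  -- dichotomies for all support points
  have hl_all : ∀ l, 0 < qΛ l →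
      (kA 0 l 2 = kA 0 l1 2 ∨ kA 1 l 1 = 0) ∧ (kA 0 l 2 = kA 0 l0 2 ∨ kA 1 l 1 = 1) := by
    intro l hl
    constructor
    · rcases hpair l m0 hl hqm0 with h | h
      · exact Or.inl (h.1.trans hpl1m0.1.symm)
      · exact Or.inr (by rw [h.1, hδ0])
    · rcases hpair l m1 hl hqm1 with h | h
      · exact Or.inl (h.1.trans hpl0m1.1.symm)
      · exact Or.inr (by rw [h.1, hδ1])
  have hm_all : ∀ m, 0 < qM m →
      (kC 0 m 1 = kA 0 l1 2 ∨ kC 1 m 0 = 1) ∧ (kC 0 m 1 = kA 0 l0 2 ∨ kC 1 m 0 = 0) := by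
    intro m hm
    constructor
    · rcases hpair l1 m hql1 hm with h | h
      · exact Or.inl h.1.symm
      · exact Or.inr (by rw [← h.1, hε1])
    · rcases hpair l0 m hql0 hm with h | h
      · exact Or.inl h.1.symm
      · exact Or.inr (by rw [← h.1, hε0])
  -- case A: the two reference values agree
  have hCaseA : ∀ i : ℝ, (∀ l, 0 < qΛ l → kA 0 l 2 = i) → (i = 0 ∨ i = 1) → False := by
    intro i hα hi
    have h1 : ∑ l, ∑ m, qΛ l * qM m * (kA 0 l 2 * kB l m 0)
        = ∑ l, ∑ m, qΛ l * qM m * (i * kB l m 0) :=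
      hsupp _ _ (fun l m hl hm => by rw [hα l hl])
    have h2 : ∑ l, ∑ m, qΛ l * qM m * (i * kB l m 0)
        = i * ∑ l, ∑ m, qΛ l * qM m * kB l m 0 := by
      rw [Finset.mul_sum]
      refine Finset.sum_congr rfl fun l _ => ?_
      rw [Finset.mul_sum]
      exact Finset.sum_congr rfl fun m _ => by ring
    have : (5:ℝ)/21 = i * (1/2) := by rw [← hW2, h1, h2, hB0]
    rcases hi with h | h <;> rw [h] at this <;> norm_num at this
  -- idempotence dichotomies for the reference values
  have hi1 : kA 0 l1 2 = 0 ∨ kA 0 l1 2 = 1 := by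
    rcases mul_eq_zero.mp hpl1m0.2 with h | h
    · exact Or.inl h
    · exact Or.inr (by linarith)
  have hi0 : kA 0 l0 2 = 0 ∨ kA 0 l0 2 = 1 := by
    rcases mul_eq_zero.mp hpl0m1.2 with h | h
    · exact Or.inl h
    · exact Or.inr (by linarith)
  -- case B: the two reference values differ
  have hCaseB : kA 0 l1 2 ≠ kA 0 l0 2 → False := by
    intro hne
    -- pointwise structure on the support
    have hpt : ∀ l m, 0 < qΛ l → 0 < qM m →
        kA 1 l 1 * kB l m 1 = kA 1 l 1 * kC 1 m 0 ∧
        kB l m 1 = kA 1 l 1 * kC 1 m 0 + (1 - kA 1 l 1) * (1 - kC 1 m 0) ∧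
        kA 0 l 2 * kB l m 0 = kA 0 l1 2 * (kA 1 l 1 * (1 - kC 1 m 0))
          + kA 0 l0 2 * ((1 - kA 1 l 1) * kC 1 m 0) := by
      intro l m hl hm
      obtain ⟨d1, d2⟩ := hl_all l hl
      obtain ⟨d1m, d2m⟩ := hm_all m hm
      -- ε l ∈ {0,1} with corresponding α
      have hεα : (kA 1 l 1 = 1 ∧ kA 0 l 2 = kA 0 l1 2) ∨ (kA 1 l 1 = 0 ∧ kA 0 l 2 = kA 0 l0 2) := by
        rcases d1 with h1 | h1
        · rcases d2 with h2 | h2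
          · exact absurd (h1.symm.trans h2) hne
          · exact Or.inl ⟨h2, h1⟩
        · rcases d2 with h2 | h2
          · exact Or.inr ⟨h1, h2⟩
          · exfalso; rw [h1] at h2; norm_num at h2
      have hδγ : (kC 1 m 0 = 1 ∧ kC 0 m 1 = kA 0 l0 2) ∨ (kC 1 m 0 = 0 ∧ kC 0 m 1 = kA 0 l1 2) := by
        rcases d1m with h1 | h1
        · rcases d2m with h2 | h2
          · exact absurd (h1.symm.trans h2) hne
          · exact Or.inr ⟨h2, h1⟩
        · rcases d2m with h2 | h2
          · exact Or.inl ⟨h1, h2⟩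
          · exfalso; rw [h1] at h2; norm_num at h2
      rcases hεα with ⟨hε, hα⟩ | ⟨hε, hα⟩ <;> rcases hδγ with ⟨hδ, hγ⟩ | ⟨hδ, hγ⟩
      · -- ε = 1, δ = 1 : kB0 = 0
        have hb0 : kB l m 0 = 0 := by
          by_contra hb
          have hbpos : 0 < kB l m 0 := (hkB0 l m 0).lt_of_ne (Ne.symm hb)
          have := (hpair0 l m hl hm hbpos).1
          rw [hα, hγ] at this
          exact hne this
        have hb1 : kB l m 1 = 1 := by have := hkB2 l m; linarith
        refine ⟨?_, ?_, ?_⟩ <;> simp only [hε, hδ, hb1, hb0, hα] <;> ring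
      · -- ε = 1, δ = 0 : kB1 = 0
        have hb1 : kB l m 1 = 0 := by
          by_contra hb
          have hbpos : 0 < kB l m 1 := (hkB0 l m 1).lt_of_ne (Ne.symm hb)
          have := (hpair1 l m hl hm hbpos).1
          rw [hε, hδ] at this
          norm_num at this
        have hb0 : kB l m 0 = 1 := by have := hkB2 l m; linarith
        refine ⟨?_, ?_, ?_⟩ <;> simp only [hε, hδ, hb1, hb0, hα] <;> ring
      · -- ε = 0, δ = 1 : kB1 = 0
        have hb1 : kB l m 1 = 0 := by
          by_contra hb
          have hbpos : 0 < kB l m 1 := (hkB0 l m 1).lt_of_ne (Ne.symm hb)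
          have := (hpair1 l m hl hm hbpos).1
          rw [hε, hδ] at this
          norm_num at this
        have hb0 : kB l m 0 = 1 := by have := hkB2 l m; linarith
        refine ⟨?_, ?_, ?_⟩ <;> simp only [hε, hδ, hb1, hb0, hα] <;> ring
      · -- ε = 0, δ = 0 : kB0 = 0
        have hb0 : kB l m 0 = 0 := by
          by_contra hb
          have hbpos : 0 < kB l m 0 := (hkB0 l m 0).lt_of_ne (Ne.symm hb)
          have := (hpair0 l m hl hm hbpos).1
          rw [hα, hγ] at this
          exact hne this.symm
        have hb1 : kB l m 1 = 1 := by have := hkB2 l m; linarith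
        refine ⟨?_, ?_, ?_⟩ <;> simp only [hε, hδ, hb1, hb0, hα] <;> ring
    -- moments
    set X := ∑ l, qΛ l * kA 1 l 1 with hX_def
    set Y := ∑ m, qM m * kC 1 m 0 with hY_def
    have hEX : ∑ l, ∑ m, qΛ l * qM m * kA 1 l 1 = X := by
      refine Finset.sum_congr rfl fun l _ => ?_
      calc ∑ m, qΛ l * qM m * kA 1 l 1 = ∑ m, (qΛ l * kA 1 l 1) * qM m :=
            Finset.sum_congr rfl fun m _ => by ring
        _ = (qΛ l * kA 1 l 1) * ∑ m, qM m := by rw [← Finset.mul_sum]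
        _ = qΛ l * kA 1 l 1 := by rw [hqM1, mul_one]
    have hEY : ∑ l, ∑ m, qΛ l * qM m * kC 1 m 0 = Y := by
      calc ∑ l, ∑ m, qΛ l * qM m * kC 1 m 0
          = ∑ l, qΛ l * ∑ m, qM m * kC 1 m 0 := by
            refine Finset.sum_congr rfl fun l _ => ?_
            rw [Finset.mul_sum]
            exact Finset.sum_congr rfl fun m _ => by ring
        _ = (∑ l, qΛ l) * Y := by rw [← Finset.sum_mul]
        _ = Y := by rw [hqΛ1, one_mul]
    have hEXY : ∑ l, ∑ m, qΛ l * qM m * (kA 1 l 1 * kC 1 m 0) = X * Y := by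
      calc ∑ l, ∑ m, qΛ l * qM m * (kA 1 l 1 * kC 1 m 0)
          = ∑ l, (qΛ l * kA 1 l 1) * ∑ m, qM m * kC 1 m 0 := by
            refine Finset.sum_congr rfl fun l _ => ?_
            rw [Finset.mul_sum]
            exact Finset.sum_congr rfl fun m _ => by ring
        _ = (∑ l, qΛ l * kA 1 l 1) * Y := by rw [← Finset.sum_mul]
        _ = X * Y := rfl
    -- aggregated equations
    have hS1 : X * Y = 1/42 := by
      have h := hsupp (fun l m => kA 1 l 1 * kB l m 1) (fun l m => kA 1 l 1 * kC 1 m 0)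
        (fun l m hl hm => (hpt l m hl hm).1)
      calc X * Y = ∑ l, ∑ m, qΛ l * qM m * (kA 1 l 1 * kC 1 m 0) := hEXY.symm
        _ = ∑ l, ∑ m, qΛ l * qM m * (kA 1 l 1 * kB l m 1) := h.symm
        _ = 1/42 := hV1
    have hS2 : 1 - X - Y + 2 * (X * Y) = 1/2 := by
      have h := hsupp (fun l m => kB l m 1)
        (fun l m => kA 1 l 1 * kC 1 m 0 + (1 - kA 1 l 1) * (1 - kC 1 m 0))
        (fun l m hl hm => (hpt l m hl hm).2.1)
      have hsplit : ∑ l, ∑ m, qΛ l * qM m *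
          (kA 1 l 1 * kC 1 m 0 + (1 - kA 1 l 1) * (1 - kC 1 m 0))
          = 1 - X - Y + 2 * (X * Y) := by
        calc ∑ l, ∑ m, qΛ l * qM m *
            (kA 1 l 1 * kC 1 m 0 + (1 - kA 1 l 1) * (1 - kC 1 m 0))
            = ∑ l, ∑ m, (qΛ l * qM m
                + (qΛ l * qM m * (kA 1 l 1 * kC 1 m 0) + qΛ l * qM m * (kA 1 l 1 * kC 1 m 0))
                - qΛ l * qM m * kA 1 l 1 - qΛ l * qM m * kC 1 m 0) :=
              Finset.sum_congr rfl fun l _ => Finset.sum_congr rfl fun m _ => by ring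
          _ = 1 - X - Y + 2 * (X * Y) := by
              simp only [Finset.sum_add_distrib, Finset.sum_sub_distrib]
              rw [hT, hEX, hEY, hEXY]
              ring
      calc 1 - X - Y + 2 * (X * Y)
          = ∑ l, ∑ m, qΛ l * qM m * (kB l m 1) := by rw [← hsplit, ← h]
        _ = 1/2 := hB1
    have hS3 : kA 0 l1 2 * X - kA 0 l1 2 * (X * Y)
        + (kA 0 l0 2 * Y - kA 0 l0 2 * (X * Y)) = 5/21 := by
      have h := hsupp (fun l m => kA 0 l 2 * kB l m 0)
        (fun l m => kA 0 l1 2 * (kA 1 l 1 * (1 - kC 1 m 0))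
          + kA 0 l0 2 * ((1 - kA 1 l 1) * kC 1 m 0))
        (fun l m hl hm => (hpt l m hl hm).2.2)
      have hsplit : ∑ l, ∑ m, qΛ l * qM m *
          (kA 0 l1 2 * (kA 1 l 1 * (1 - kC 1 m 0)) + kA 0 l0 2 * ((1 - kA 1 l 1) * kC 1 m 0))
          = kA 0 l1 2 * X - kA 0 l1 2 * (X * Y) + (kA 0 l0 2 * Y - kA 0 l0 2 * (X * Y)) := by
        calc ∑ l, ∑ m, qΛ l * qM m *
            (kA 0 l1 2 * (kA 1 l 1 * (1 - kC 1 m 0)) + kA 0 l0 2 * ((1 - kA 1 l 1) * kC 1 m 0))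
            = ∑ l, ∑ m, (kA 0 l1 2 * (qΛ l * qM m * kA 1 l 1)
                - kA 0 l1 2 * (qΛ l * qM m * (kA 1 l 1 * kC 1 m 0))
                + (kA 0 l0 2 * (qΛ l * qM m * kC 1 m 0)
                - kA 0 l0 2 * (qΛ l * qM m * (kA 1 l 1 * kC 1 m 0)))) :=
              Finset.sum_congr rfl fun l _ => Finset.sum_congr rfl fun m _ => by ring
          _ = kA 0 l1 2 * X - kA 0 l1 2 * (X * Y)
              + (kA 0 l0 2 * Y - kA 0 l0 2 * (X * Y)) := by
              simp only [Finset.sum_add_distrib, Finset.sum_sub_distrib, ← Finset.mul_sum]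
              rw [hEX, hEY, hEXY]
      calc kA 0 l1 2 * X - kA 0 l1 2 * (X * Y) + (kA 0 l0 2 * Y - kA 0 l0 2 * (X * Y))
          = ∑ l, ∑ m, qΛ l * qM m * (kA 0 l 2 * kB l m 0) := by rw [← hsplit, ← h]
        _ = 5/21 := hW2
    -- final arithmetic
    rcases hi1 with h1 | h1 <;> rcases hi0 with h0 | h0
    · exact hne (by rw [h1, h0])
    · rw [h1, h0] at hS3
      have hY : Y = 11/42 := by linarith [hS1, hS3]
      have hX : X = 12/42 := by linarith [hS1, hS2, hY]
      rw [hX, hY] at hS1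
      norm_num at hS1
    · rw [h1, h0] at hS3
      have hX : X = 11/42 := by linarith [hS1, hS3]
      have hY : Y = 12/42 := by linarith [hS1, hS2, hX]
      rw [hX, hY] at hS1
      norm_num at hS1
    · exact hne (by rw [h1, h0])
  -- top-level case analysis
  rcases hi1 with h1 | h1 <;> rcases hi0 with h0 | h0
  · refine hCaseA 0 (fun l hl => ?_) (Or.inl rfl)
    obtain ⟨d1, d2⟩ := hl_all l hl
    rcases d1 with h | h
    · rw [h, h1]
    · rcases d2 with h' | h'
      · rw [h', h0]
      · rw [h] at h'; norm_num at h'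
  · exact hCaseB (by rw [h1, h0]; norm_num)
  · exact hCaseB (by rw [h1, h0]; norm_num)
  · refine hCaseA 1 (fun l hl => ?_) (Or.inr rfl)
    obtain ⟨d1, d2⟩ := hl_all l hl
    rcases d1 with h | h
    · rw [h, h1]
    · rcases d2 with h' | h'
      · rw [h', h0]
      · rw [h] at h'; norm_num at h'
end
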